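/- arXiv:1209.2836 — 4 statements merged into one kernel-verified Lean document; each statement's English description precedes it below -/
import Mathlib

section
/- Let φ = Id + f be a smooth diffeomorphism of ℝ with f' compactly supported and f' > -1, and suppose f(-∞) = 0 (i.e. f(x) = ∫_{-∞}^x f'(y) dy). Define R(φ) = 2((1+f')^{1/2} - 1) and R⁻¹(γ)(x) = x + (1/4)∫_{-∞}^x (γ(y)² + 4γ(y)) dy. Then R⁻¹(R(φ)) = φ. -/
open MeasureTheory

theorem R_inv_comp_R_eq_id (f : ℝ → ℝ)
    (hf : ContDiff ℝ (⊤ : ℕ∞) f)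
    (hsupp : HasCompactSupport (deriv f))
    (hf' : ∀ x, deriv f x > -1)
    (hf0 : ∀ x, f x = ∫ y in Set.Iic x, deriv f y) :
    ∀ x : ℝ,
      x + (1/4) * (∫ y in Set.Iic x,
          ((2 * (Real.sqrt (1 + deriv f y) - 1)) ^ 2
            + 4 * (2 * (Real.sqrt (1 + deriv f y) - 1))))
        = x + f x := by
  intro x
  have key : (fun y => ((2 * (Real.sqrt (1 + deriv f y) - 1)) ^ 2
      + 4 * (2 * (Real.sqrt (1 + deriv f y) - 1)))) = fun y => 4 * deriv f y := by
    funext y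
    have h1 : (0:ℝ) ≤ 1 + deriv f y := by linarith [hf' y]
    have h2 : Real.sqrt (1 + deriv f y) ^ 2 = 1 + deriv f y := Real.sq_sqrt h1
    nlinarith [h2]
  rw [key, integral_const_mul, ← hf0]
  ring
end

section
/- Let u₀ : ℝ → ℝ be smooth with compactly supported derivative, not identically constant, and suppose u₀'(x₀) < 0 for some x₀. Then there exists a finite T > 0 such that the function x ↦ 1 + (T/2)u₀'(x) vanishes at some point, i.e. the Hunter–Saxton flow φ(t,x) = x + (1/4)∫_{-∞}^x(t²u₀'² + 4tu₀')dy ceases to be a diffeomorphism at time T. Conversely, if u₀'(x) ≥ 0 for all x, then φ(t,·) is a diffeomorphism for all t ≥ 0. -/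
open MeasureTheory

theorem hs_blowup_criterion (u₀ : ℝ → ℝ)
    (hu : ContDiff ℝ (⊤ : ℕ∞) u₀)
    (hsupp : HasCompactSupport (deriv u₀))
    (hnc : ¬ ∀ x, deriv u₀ x = 0) :
    ((∃ x₀, deriv u₀ x₀ < 0) →
        ∃ T > (0:ℝ), ∃ x, 1 + (T/2) * deriv u₀ x = 0) ∧
    ((∀ x, 0 ≤ deriv u₀ x) →
        ∀ t ≥ (0:ℝ), StrictMono (fun x : ℝ => x + (1/4) * ∫ y in Set.Iic x,
          (t ^ 2 * (deriv u₀ y) ^ 2 + 4 * t * deriv u₀ y)) ∧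
        Function.Bijective (fun x : ℝ => x + (1/4) * ∫ y in Set.Iic x,
          (t ^ 2 * (deriv u₀ y) ^ 2 + 4 * t * deriv u₀ y))) := by
  constructor
  · rintro ⟨x₀, hx₀⟩
    have hd : deriv u₀ x₀ ≠ 0 := ne_of_lt hx₀
    refine ⟨-2 / deriv u₀ x₀, div_pos_of_neg_of_neg (by norm_num) hx₀, x₀, ?_⟩
    field_simp
    ring
  · intro hpos t ht
    set f := deriv u₀ with hf
    set g : ℝ → ℝ := fun y => t ^ 2 * f y ^ 2 + 4 * t * f y with hg
    have hfc : Continuous f := hu.continuous_deriv (by simp)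
    have hgc : Continuous g := by continuity
    have hgsupp : HasCompactSupport g := by
      have : g = (fun s : ℝ => t ^ 2 * s ^ 2 + 4 * t * s) ∘ f := rfl
      rw [this]
      exact hsupp.comp_left (by simp)
    have hgint : Integrable g := hgc.integrable_of_hasCompactSupport hgsupp
    have hg0 : ∀ y, 0 ≤ g y := fun y => by
      have := hpos y
      have : 0 ≤ f y := this
      positivity
    set F : ℝ → ℝ := fun x => x + (1/4) * ∫ y in Set.Iic x, g y with hF
    have hmono : StrictMono F := by
      intro a b hab
      have h1 : (∫ y in Set.Iic b, g y) - ∫ y in Set.Iic a, g y = ∫ y in a..b, g y :=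
        intervalIntegral.integral_Iic_sub_Iic hgint.integrableOn hgint.integrableOn
      have h2 : 0 ≤ ∫ y in a..b, g y :=
        intervalIntegral.integral_nonneg hab.le (fun y _ => hg0 y)
      have : (∫ y in Set.Iic a, g y) ≤ ∫ y in Set.Iic b, g y := by linarith
      simp only [hF]
      have : (1/4 : ℝ) * ∫ y in Set.Iic a, g y ≤ (1/4) * ∫ y in Set.Iic b, g y := by linarith
      linarith
    refine ⟨hmono, hmono.injective, ?_⟩
    have hFcont : Continuous F := by
      have : Continuous (fun x => ∫ y in Set.Iic x, g y) := by
        have h1 : Continuous (fun x => ∫ y in (0:ℝ)..x, g y) := hgint.continuous_primitive 0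
        have h2 : (fun x => ∫ y in Set.Iic x, g y)
            = fun x => (∫ y in Set.Iic (0:ℝ), g y) + ∫ y in (0:ℝ)..x, g y := by
          funext x
          have := intervalIntegral.integral_Iic_sub_Iic (f := g) (μ := volume) (a := (0:ℝ))
            (b := x) hgint.integrableOn hgint.integrableOn
          linarith
        rw [h2]
        exact continuous_const.add h1
      exact continuous_id.add (continuous_const.mul this)
    have hIic : ∀ x, 0 ≤ ∫ y in Set.Iic x, g y := fun x =>
      setIntegral_nonneg measurableSet_Iic (fun y _ => hg0 y)
    have hIicle : ∀ x, (∫ y in Set.Iic x, g y) ≤ ∫ y, g y := fun x =>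
      setIntegral_le_integral hgint (Filter.Eventually.of_forall hg0)
    have htop : Filter.Tendsto F Filter.atTop Filter.atTop := by
      apply Filter.tendsto_atTop_mono (f := id) (fun x => ?_) Filter.tendsto_id
      have := hIic x
      simp only [hF, id]
      nlinarith
    have hbot : Filter.Tendsto F Filter.atBot Filter.atBot := by
      have hle : ∀ x, F x ≤ x + (1/4) * ∫ y, g y := by
        intro x
        have := hIicle x
        simp only [hF]
        nlinarith
      have h2 : Filter.Tendsto (fun x : ℝ => x + (1/4) * ∫ y, g y)
          Filter.atBot Filter.atBot :=
        Filter.tendsto_atBot_add_const_right _ _ Filter.tendsto_id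
      exact Filter.tendsto_atBot_mono hle h2
    exact hFcont.surjective htop hbot
end

section
/- Let γ₀, k : ℝ → ℝ be continuous with γ₀(x) > -2 for all x, k not identically zero, k(x) → 0 as |x| → ∞, and γ₀(x) → 0 as |x| → ∞. Then there exists T ∈ ℝ with T ≠ 0 such that γ₀(x) + t·k(x) > -2 for all x when |t| < |T|, and γ₀(x₀) + T·k(x₀) = -2 for some x₀ ∈ ℝ. -/
/-!
Write `c = 2 + γ₀ > 0`. The line `c + t k` stays positive as long as `|t| |k x| < c x` for all `x`,
so the exit time is `T = -c x₀ / k x₀`, where `x₀` maximises the ratio `|k| / c`. This ratio is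
continuous, positive somewhere and tends to `0` at `±∞`, so its maximum is attained.
-/

open Filter Topology

theorem Continuous.exists_forall_ge_of_tendsto_cocompact {X α : Type*} [TopologicalSpace X]
    [LinearOrder α] [TopologicalSpace α] [OrderTopology α] {f : X → α} (hf : Continuous f)
    {a : α} (hlim : Tendsto f (cocompact X) (𝓝 a)) {x₁ : X} (hx₁ : a < f x₁) :
    ∃ x₀, ∀ x, f x ≤ f x₀ :=
  hf.exists_forall_ge' x₁ (hlim.eventually (ge_mem_nhds hx₁))

theorem Filter.Tendsto.abs_div_const_add {X : Type*} {l : Filter X} {k γ : X → ℝ} {c : ℝ}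
    (hk : Tendsto k l (𝓝 0)) (hγ : Tendsto γ l (𝓝 0)) (hc : c ≠ 0) :
    Tendsto (fun x => |k x| / (c + γ x)) l (𝓝 0) := by
  have h : Tendsto (fun x => |k x| / (c + γ x)) l (𝓝 (|0| / (c + 0))) :=
    hk.abs.div (tendsto_const_nhds.add hγ) (by simpa using hc)
  simpa using h

theorem add_mul_pos_of_abs_lt_div {c k c₀ k₀ t : ℝ} (hc : 0 < c) (hc₀ : 0 < c₀) (hk₀ : k₀ ≠ 0)
    (hratio : |k| / c ≤ |k₀| / c₀) (ht : |t| < c₀ / |k₀|) : 0 < c + t * k := by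
  have hk₀' : 0 < |k₀| := abs_pos.2 hk₀
  have hk : |k| ≤ |k₀| / c₀ * c := (div_le_iff₀ hc).1 hratio
  have htk : |t * k| < c :=
    calc |t * k| = |t| * |k| := abs_mul t k
      _ ≤ |t| * (|k₀| / c₀ * c) := mul_le_mul_of_nonneg_left hk (abs_nonneg t)
      _ < c₀ / |k₀| * (|k₀| / c₀ * c) := mul_lt_mul_of_pos_right ht (by positivity)
      _ = c := by field_simp
  linarith [neg_abs_le (t * k)]

theorem exists_exit_time_of_isMax_ratio {X : Type*} {c k : X → ℝ} (hc : ∀ x, 0 < c x) {x₀ : X}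
    (hk₀ : k x₀ ≠ 0) (hmax : ∀ x, |k x| / c x ≤ |k x₀| / c x₀) :
    ∃ T : ℝ, T ≠ 0 ∧ (∀ t : ℝ, |t| < |T| → ∀ x, 0 < c x + t * k x) ∧ c x₀ + T * k x₀ = 0 := by
  refine ⟨-c x₀ / k x₀, div_ne_zero (neg_ne_zero.2 (hc x₀).ne') hk₀, fun t ht x => ?_, ?_⟩
  · rw [abs_div, abs_neg, abs_of_pos (hc x₀)] at ht
    exact add_mul_pos_of_abs_lt_div (hc x) (hc x₀) hk₀ (hmax x) ht
  · field_simp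
    ring

theorem geodesic_incompleteness (γ₀ k : ℝ → ℝ)
    (hγc : Continuous γ₀) (hkc : Continuous k)
    (hγ : ∀ x, γ₀ x > -2)
    (hk0 : ¬ ∀ x, k x = 0)
    (hktop : Tendsto k atTop (nhds 0)) (hkbot : Tendsto k atBot (nhds 0))
    (hγtop : Tendsto γ₀ atTop (nhds 0)) (hγbot : Tendsto γ₀ atBot (nhds 0)) :
    ∃ T : ℝ, T ≠ 0 ∧
      (∀ t : ℝ, |t| < |T| → ∀ x, γ₀ x + t * k x > -2) ∧
      ∃ x₀, γ₀ x₀ + T * k x₀ = -2 := by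
  obtain ⟨x₁, hx₁⟩ := not_forall.1 hk0
  have hc : ∀ x, 0 < 2 + γ₀ x := fun x => by linarith [hγ x]
  set ψ : ℝ → ℝ := fun x => |k x| / (2 + γ₀ x)
  have hψc : Continuous ψ := hkc.abs.div (continuous_const.add hγc) fun x => (hc x).ne'
  have hψlim : Tendsto ψ (cocompact ℝ) (𝓝 0) := by
    rw [cocompact_eq_atBot_atTop]
    exact tendsto_sup.2 ⟨hkbot.abs_div_const_add hγbot two_ne_zero,
      hktop.abs_div_const_add hγtop two_ne_zero⟩
  have hψx₁ : 0 < ψ x₁ := div_pos (abs_pos.2 hx₁) (hc x₁)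
  obtain ⟨x₀, hx₀⟩ := hψc.exists_forall_ge_of_tendsto_cocompact hψlim hψx₁
  have hk₀ : k x₀ ≠ 0 := fun h => by
    have := hψx₁.trans_le (hx₀ x₁)
    simp [ψ, h] at this
  obtain ⟨T, hT, hpos, hexit⟩ := exists_exit_time_of_isMax_ratio hc hk₀ hx₀
  refine ⟨T, hT, fun t ht x => ?_, x₀, by linarith⟩
  linarith [hpos t ht x]
end

section
/- Let γ₀, γ₁ : ℝ → ℝ be continuous with γᵢ > -2, with γᵢ² + 4γᵢ integrable and ∫_ℝ (γᵢ(x)² + 4γᵢ(x)) dx = 0 for i = 0,1. Set γ(t) = (1−t)γ₀ + tγ₁. Then ∫_ℝ (γ(t,x)² + 4γ(t,x)) dx = (t² − t)∫_ℝ (γ₁(x) − γ₀(x))² dx ≤ 0 for t ∈ [0,1]. -/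
/-! Pointwise, `y ↦ y² + 4y` is a quadratic, so along the segment `γ t = (1 - t) γ₀ + t γ₁`
it equals the convex combination of its values at the endpoints plus `(t² - t) (γ₁ - γ₀)²`.
Integrating, the endpoint terms vanish and `t² - t ≤ 0` on `[0, 1]`. The only analytic input is
that `γ > -2` makes `γ` and `γ²` integrable: `|γ² + 4γ| = |γ| (γ + 4) ≥ 2 |γ|`, and `γ` is
recovered measurably as `√(γ² + 4γ + 4) - 2`. -/

open MeasureTheory

lemma sq_add_four_mul_lineMap (a b t : ℝ) :
    ((1 - t) * a + t * b) ^ 2 + 4 * ((1 - t) * a + t * b)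
      = (1 - t) * (a ^ 2 + 4 * a) + t * (b ^ 2 + 4 * b) + (t ^ 2 - t) * (b - a) ^ 2 := by
  ring

lemma two_mul_abs_le_abs_sq_add_four_mul {y : ℝ} (hy : -2 < y) : 2 * |y| ≤ |y ^ 2 + 4 * y| := by
  rw [show y ^ 2 + 4 * y = y * (y + 4) by ring, abs_mul, abs_of_pos (by linarith : 0 < y + 4)]
  nlinarith [abs_nonneg y]

lemma sqrt_sq_add_four_mul_add_four_sub_two {y : ℝ} (hy : -2 < y) :
    √(y ^ 2 + 4 * y + 4) - 2 = y := by
  rw [show y ^ 2 + 4 * y + 4 = (y + 2) ^ 2 by ring, Real.sqrt_sq (by linarith)]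
  ring

section

variable {α : Type*} [MeasurableSpace α] {μ : Measure α} {γ : α → ℝ}

lemma integrable_of_integrable_sq_add_four_mul (hγ : ∀ᵐ x ∂μ, -2 < γ x)
    (h : Integrable (fun x => γ x ^ 2 + 4 * γ x) μ) : Integrable γ μ := by
  have hmeas : AEStronglyMeasurable γ μ := by
    refine ((Real.continuous_sqrt.comp_aestronglyMeasurable
      (h.aestronglyMeasurable.add_const 4)).sub (aestronglyMeasurable_const (b := 2))).congr ?_
    filter_upwards [hγ] with x hx using sqrt_sq_add_four_mul_add_four_sub_two hx
  refine Integrable.mono' (h.abs.div_const 2) hmeas ?_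
  filter_upwards [hγ] with x hx
  rw [Real.norm_eq_abs, le_div_iff₀ two_pos, mul_comm]
  exact two_mul_abs_le_abs_sq_add_four_mul hx

lemma memLp_two_of_integrable_sq_add_four_mul (hγ : ∀ᵐ x ∂μ, -2 < γ x)
    (h : Integrable (fun x => γ x ^ 2 + 4 * γ x) μ) : MemLp γ 2 μ := by
  have hγi := integrable_of_integrable_sq_add_four_mul hγ h
  refine (memLp_two_iff_integrable_sq hγi.aestronglyMeasurable).2 ?_
  refine (h.sub (hγi.const_mul 4)).congr (.of_forall fun x => ?_)
  simp only [Pi.sub_apply]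
  ring

lemma integral_sq_add_four_mul_lineMap {γ₀ γ₁ : α → ℝ}
    (h₀ : Integrable (fun x => γ₀ x ^ 2 + 4 * γ₀ x) μ)
    (h₁ : Integrable (fun x => γ₁ x ^ 2 + 4 * γ₁ x) μ)
    (hd : Integrable (fun x => (γ₁ x - γ₀ x) ^ 2) μ) (t : ℝ) :
    ∫ x, (((1 - t) * γ₀ x + t * γ₁ x) ^ 2 + 4 * ((1 - t) * γ₀ x + t * γ₁ x)) ∂μ
      = (1 - t) * ∫ x, (γ₀ x ^ 2 + 4 * γ₀ x) ∂μ + t * ∫ x, (γ₁ x ^ 2 + 4 * γ₁ x) ∂μ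
        + (t ^ 2 - t) * ∫ x, (γ₁ x - γ₀ x) ^ 2 ∂μ := by
  simp_rw [sq_add_four_mul_lineMap]
  rw [integral_add, integral_add, integral_const_mul, integral_const_mul, integral_const_mul]
  exacts [h₀.const_mul _, h₁.const_mul _, (h₀.const_mul _).add (h₁.const_mul _), hd.const_mul _]

end

theorem shift_along_geodesic_general (γ₀ γ₁ : ℝ → ℝ)
    (hγ₀ : ∀ x, γ₀ x > -2) (hγ₁ : ∀ x, γ₁ x > -2)
    (hint₀ : Integrable (fun x => γ₀ x ^ 2 + 4 * γ₀ x))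
    (hint₁ : Integrable (fun x => γ₁ x ^ 2 + 4 * γ₁ x))
    (hz₀ : ∫ x, (γ₀ x ^ 2 + 4 * γ₀ x) = 0)
    (hz₁ : ∫ x, (γ₁ x ^ 2 + 4 * γ₁ x) = 0) :
    ∀ t ∈ Set.Icc (0:ℝ) 1,
      (∫ x, (((1 - t) * γ₀ x + t * γ₁ x) ^ 2 + 4 * ((1 - t) * γ₀ x + t * γ₁ x)))
          = (t ^ 2 - t) * ∫ x, (γ₁ x - γ₀ x) ^ 2 ∧
      (∫ x, (((1 - t) * γ₀ x + t * γ₁ x) ^ 2 + 4 * ((1 - t) * γ₀ x + t * γ₁ x))) ≤ 0 := by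
  intro t ⟨ht₀, ht₁⟩
  have hd : Integrable (fun x => (γ₁ x - γ₀ x) ^ 2) :=
    ((memLp_two_of_integrable_sq_add_four_mul (.of_forall hγ₁) hint₁).sub
      (memLp_two_of_integrable_sq_add_four_mul (.of_forall hγ₀) hint₀)).integrable_sq
  have heq : (∫ x, (((1 - t) * γ₀ x + t * γ₁ x) ^ 2 + 4 * ((1 - t) * γ₀ x + t * γ₁ x)))
      = (t ^ 2 - t) * ∫ x, (γ₁ x - γ₀ x) ^ 2 := by
    rw [integral_sq_add_four_mul_lineMap hint₀ hint₁ hd, hz₀, hz₁]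
    ring
  refine ⟨heq, heq ▸ mul_nonpos_of_nonpos_of_nonneg ?_ (integral_nonneg fun x => sq_nonneg _)⟩
  nlinarith

theorem shift_along_geodesic (γ₀ γ₁ : ℝ → ℝ)
    (hγ₀c : Continuous γ₀) (hγ₁c : Continuous γ₁)
    (hγ₀ : ∀ x, γ₀ x > -2) (hγ₁ : ∀ x, γ₁ x > -2)
    (hint₀ : Integrable (fun x => γ₀ x ^ 2 + 4 * γ₀ x))
    (hint₁ : Integrable (fun x => γ₁ x ^ 2 + 4 * γ₁ x))
    (hz₀ : ∫ x, (γ₀ x ^ 2 + 4 * γ₀ x) = 0)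
    (hz₁ : ∫ x, (γ₁ x ^ 2 + 4 * γ₁ x) = 0) :
    ∀ t ∈ Set.Icc (0:ℝ) 1,
      (∫ x, (((1 - t) * γ₀ x + t * γ₁ x) ^ 2 + 4 * ((1 - t) * γ₀ x + t * γ₁ x)))
          = (t ^ 2 - t) * ∫ x, (γ₁ x - γ₀ x) ^ 2 ∧
      (∫ x, (((1 - t) * γ₀ x + t * γ₁ x) ^ 2 + 4 * ((1 - t) * γ₀ x + t * γ₁ x))) ≤ 0 :=
  shift_along_geodesic_general γ₀ γ₁ hγ₀ hγ₁ hint₀ hint₁ hz₀ hz₁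
end
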